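/- Let B be a small minimal blocking set with exponent e in PG(n,q), where q = p^t, p prime, e divides t, q0 := p^e ≥ 7 and h := t/e. Then |B| ≤ q0^h + q0^{h−1} + q0^{h−2} + 3·q0^{h−3}. -/

import Mathlib

open Projectivization Module

variable (F : Type*) [Field F] {V : Type*} [AddCommGroup V] [Module F V]

/-- The set of points of `PG(V)` lying in the projectivization of the linear subspace `W`. -/
def projPoints (W : Submodule F V) : Set (Projectivization F V) :=
  {x | x.submodule ≤ W}

/-- A hyperplane of `PG(V)`: the projectivization of a linear subspace of codimension 1. -/
def IsHyperplane (W : Submodule F V) : Prop :=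
  finrank F W + 1 = finrank F V

/-- A line of `PG(V)`: the projectivization of a 2-dimensional linear subspace. -/
def IsProjLine (W : Submodule F V) : Prop := finrank F W = 2

/-- A plane of `PG(V)`: the projectivization of a 3-dimensional linear subspace. -/
def IsProjPlane (W : Submodule F V) : Prop := finrank F W = 3

/-- A blocking set: a set of points meeting every hyperplane. -/
def IsBlockingSet (B : Set (Projectivization F V)) : Prop :=
  ∀ W : Submodule F V, IsHyperplane F W → (B ∩ projPoints F W).Nonempty

/-- A minimal blocking set: no proper subset is a blocking set. -/
def IsMinimalBlockingSet (B : Set (Projectivization F V)) : Prop :=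
  IsBlockingSet F B ∧ ∀ B' ⊂ B, ¬ IsBlockingSet F B'

/-- A small blocking set: `|B| < 3(q+1)/2`. -/
def IsSmall [Fintype F] (B : Set (Projectivization F V)) : Prop :=
  2 * B.ncard < 3 * (Fintype.card F + 1)

/-- Every hyperplane meets `B` in `1 mod p^m` points. -/
def HyperplanesMod (p m : ℕ) (B : Set (Projectivization F V)) : Prop :=
  ∀ W : Submodule F V, IsHyperplane F W → (B ∩ projPoints F W).ncard ≡ 1 [MOD p ^ m]

/-- `e ≥ 1` is the largest integer such that every hyperplane meets `B` in `1 mod p^e` points. -/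
def HasExponent (p : ℕ) (B : Set (Projectivization F V)) (e : ℕ) : Prop :=
  1 ≤ e ∧ HyperplanesMod F p e B ∧ ∀ m, HyperplanesMod F p m B → m ≤ e

/-- A secant line to `B`: a line meeting `B` in at least two points. -/
def IsSecant (B : Set (Projectivization F V)) (L : Submodule F V) : Prop :=
  IsProjLine F L ∧ 2 ≤ (B ∩ projPoints F L).ncard

/-- A `k`-secant to `B`: a line meeting `B` in exactly `k` points. -/
def IsKSecant (k : ℕ) (B : Set (Projectivization F V)) (L : Submodule F V) : Prop :=
  IsProjLine F L ∧ (B ∩ projPoints F L).ncard = k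

/-- Every line through `P` meets `B` in `1 mod p^m` points or in no point. -/
def LinesThroughMod (p m : ℕ) (B : Set (Projectivization F V)) (P : Projectivization F V) : Prop :=
  ∀ L : Submodule F V, IsProjLine F L → P ∈ projPoints F L →
    ((B ∩ projPoints F L).ncard ≡ 1 [MOD p ^ m] ∨ B ∩ projPoints F L = ∅)

/-- The point exponent of `P`: the largest `eP` such that every line through `P`
meets `B` in `1 mod p^eP` points or in no point. -/
def HasPointExponent (p : ℕ) (B : Set (Projectivization F V)) (P : Projectivization F V)
    (eP : ℕ) : Prop :=
  LinesThroughMod F p eP B P ∧ ∀ m, LinesThroughMod F p m B P → m ≤ eP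

/-- The subspace `W` contains three non-collinear points of `B`. -/
def HasNoncollinearTriple (B : Set (Projectivization F V)) (W : Submodule F V) : Prop :=
  ∃ a ∈ B ∩ projPoints F W, ∃ b ∈ B ∩ projPoints F W, ∃ c ∈ B ∩ projPoints F W,
    ¬ ∃ L : Submodule F V,
      IsProjLine F L ∧ a ∈ projPoints F L ∧ b ∈ projPoints F L ∧ c ∈ projPoints F L

/-- A good plane with respect to `B` and `q0`: a plane containing exactly
`q0² + q0 + 1` points of `B`, not all collinear. -/
def IsGoodPlane (q0 : ℕ) (B : Set (Projectivization F V)) (W : Submodule F V) : Prop :=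
  IsProjPlane F W ∧ (B ∩ projPoints F W).ncard = q0 ^ 2 + q0 + 1 ∧
    HasNoncollinearTriple F B W

/-- The linear point set `B(U)` determined by an `F_{q0}`-subspace `U` of `V`,
for a subfield `K = F_{q0}` of `F`. -/
def linearPointSet (K : Subfield F) (U : Submodule K V) : Set (Projectivization F V) :=
  {x | ∃ u : V, ∃ hu : u ≠ 0, u ∈ U ∧ x = Projectivization.mk F u hu}

/-- A set of points of `PG(V)` is `F_{q0}`-linear if it is of the form `B(U)` for some
`F_{q0}`-subspace `U` of `V`, where `F_{q0}` is a subfield of `F` with `q0` elements. -/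
def IsFqLinearSet (q0 : ℕ) (B : Set (Projectivization F V)) : Prop :=
  ∃ K : Subfield F, Nat.card K = q0 ∧ ∃ U : Submodule K V, B = linearPointSet F K U

/-- The linear span of the representative vectors of the points of `B`. -/
noncomputable def spanOfPoints (B : Set (Projectivization F V)) : Submodule F V :=
  ⨆ b ∈ B, b.submodule

/-- `B` spans a `(d-1)`-dimensional projective subspace: the span of the representative
vectors of its points has linear dimension `d`. -/
def SpansVDim (B : Set (Projectivization F V)) (d : ℕ) : Prop :=
  finrank F (spanOfPoints F B) = d


/-!
Each hyperplane meets `B` in `s ≡ 1 (mod q0)` points, and `s ≥ 1` because `B` is blocking, so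
`(s - 1) (s - 1 - q0) ≥ 0`. Summing over all hyperplanes and counting incidences with points and
with pairs of points of `B` turns this into a quadratic inequality in `b = |B|`; the numbers of
hyperplanes through a point, a line and in total come from duality, hyperplanes through `S`
being the points of the projective space of the annihilator of `S`. The inequality forces
`P(b) > 0` for a convex quadratic `P` which is `≤ 0` both at the claimed bound and at
`3(q + 1)/2`, so the smallness of `B` leaves no room for `b` above the bound.
-/

section Hyperplanes

variable {F} [FiniteDimensional F V]

noncomputable def hyperplanesContainingEquiv (S : Submodule F V) :
    {W : Submodule F V // IsHyperplane F W ∧ S ≤ W} ≃ Projectivization F S.dualAnnihilator :=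
  let T := S.dualAnnihilator
  ((Equiv.subtypeEquiv (Subspace.orderIsoFiniteDimensional.toEquiv.trans OrderDual.ofDual)
      fun W => by
        change _ ↔ W.dualAnnihilator ≤ T ∧ finrank F W.dualAnnihilator = 1
        have := Subspace.finrank_add_finrank_dualAnnihilator_eq W
        rw [Subspace.dualAnnihilator_le_dualAnnihilator_iff, and_comm (a := S ≤ W)]
        exact and_congr_left' (by rw [IsHyperplane]; omega)).trans
    (Equiv.subtypeSubtypeEquivSubtypeInter (· ≤ T) fun U => finrank F U = 1).symm).trans
  ((Equiv.subtypeEquiv (Submodule.MapSubtype.orderIso T).symm.toEquiv fun U => by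
      conv_lhs => rw [← (Submodule.MapSubtype.orderIso T).apply_symm_apply U]
      exact Iff.of_eq (congrArg (· = 1) (Submodule.finrank_map_subtype_eq _ _))).trans
    (Projectivization.equivSubmodule F T).symm)

theorem card_hyperplanes_containing_mul [Finite F] (S : Submodule F V) :
    Nat.card {W : Submodule F V // IsHyperplane F W ∧ S ≤ W} * (Nat.card F - 1) =
      Nat.card F ^ (finrank F V - finrank F S) - 1 := by
  rw [Nat.card_congr (hyperplanesContainingEquiv S), ← Projectivization.card,
    Module.natCard_eq_pow_finrank (K := F), ← Subspace.finrank_add_finrank_dualAnnihilator_eq S,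
    Nat.add_sub_cancel_left]

end Hyperplanes

section PointPairs

variable {F}

theorem Projectivization.finrank_sup_submodule_eq_two {x y : Projectivization F V} (hxy : x ≠ y) :
    finrank F (x.submodule ⊔ y.submodule : Submodule F V) = 2 := by
  have hdisj : Disjoint x.submodule y.submodule := by
    have h := Projectivization.independent_iff_iSupIndep.mp
      ((Projectivization.independent_pair_iff_ne x y).mpr hxy)
    simpa using (iSupIndep_pair (by decide : (0 : Fin 2) ≠ 1) (by decide)).mp h
  have h := Submodule.finrank_sup_add_finrank_inf_eq x.submodule y.submodule
  rw [disjoint_iff.mp hdisj, finrank_bot, x.finrank_submodule, y.finrank_submodule] at h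
  omega

end PointPairs

section Incidences

open Finset Classical

variable {F} [Finite F] [FiniteDimensional F V]

instance : Finite (Submodule F V) :=
  have := Module.finite_of_finite F (M := V)
  Finite.of_injective _ SetLike.coe_injective

noncomputable def hyperplanes : Finset (Submodule F V) :=
  (Set.toFinite {W : Submodule F V | IsHyperplane F W}).toFinset

theorem card_hyperplanes_filter_le_mul (S : Submodule F V) :
    #{W ∈ hyperplanes | S ≤ W} * (Nat.card F - 1) =
      Nat.card F ^ (finrank F V - finrank F S) - 1 := by
  rw [← card_hyperplanes_containing_mul S, ← Nat.card_eq_finsetCard]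
  congr 1
  exact Nat.card_congr (Equiv.subtypeEquivRight fun W => by simp [hyperplanes])

theorem card_hyperplanes_mul :
    #(hyperplanes : Finset (Submodule F V)) * (Nat.card F - 1) = Nat.card F ^ finrank F V - 1 := by
  simpa using card_hyperplanes_filter_le_mul (⊥ : Submodule F V)

theorem sum_card_points_on_hyperplanes_mul (B : Finset (Projectivization F V)) :
    (∑ W ∈ hyperplanes, #{x ∈ B | x.submodule ≤ W}) * (Nat.card F - 1) =
      #B * (Nat.card F ^ (finrank F V - 1) - 1) := by
  have hdouble := sum_card_bipartiteAbove_eq_sum_card_bipartiteBelow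
    (s := B) (t := hyperplanes) (r := fun x W => x.submodule ≤ W)
  simp only [bipartiteAbove, bipartiteBelow] at hdouble
  rw [← hdouble, sum_mul, sum_const_nat fun x _ => by
    rw [card_hyperplanes_filter_le_mul, x.finrank_submodule]]

theorem sum_card_pairs_on_hyperplanes_mul (B : Finset (Projectivization F V)) :
    (∑ W ∈ hyperplanes, #{x ∈ B | x.submodule ≤ W} * (#{x ∈ B | x.submodule ≤ W} - 1)) *
      (Nat.card F - 1) = #B * (#B - 1) * (Nat.card F ^ (finrank F V - 2) - 1) := by
  have hpairs (W : Submodule F V) :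
      #{x ∈ B | x.submodule ≤ W} * (#{x ∈ B | x.submodule ≤ W} - 1) =
        #{z ∈ B.offDiag | z.1.submodule ⊔ z.2.submodule ≤ W} := by
    rw [Nat.mul_sub_one, ← offDiag_card]
    congr 1
    ext z
    simp only [mem_offDiag, mem_filter, sup_le_iff]
    tauto
  have hdouble := sum_card_bipartiteAbove_eq_sum_card_bipartiteBelow
    (s := B.offDiag) (t := hyperplanes) (r := fun z W => z.1.submodule ⊔ z.2.submodule ≤ W)
  simp only [bipartiteAbove, bipartiteBelow] at hdouble
  rw [sum_congr rfl fun W _ => hpairs W, ← hdouble, sum_mul, Nat.mul_sub_one #B #B,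
    ← offDiag_card, sum_const_nat fun z hz => by
      rw [card_hyperplanes_filter_le_mul, finrank_sup_submodule_eq_two (mem_offDiag.mp hz).2.2]]

end Incidences

theorem add_one_mul_le_mul_sub_one_add {s k : ℕ} (hs : 1 ≤ s) (hmod : s ≡ 1 [MOD k]) :
    (k + 1) * s ≤ s * (s - 1) + (k + 1) := by
  obtain ⟨r, hr⟩ := (Nat.modEq_iff_dvd' hs).mp hmod.symm
  obtain ⟨s, rfl⟩ : ∃ s', s = s' + 1 := ⟨s - 1, by omega⟩
  simp only [Nat.add_sub_cancel] at hr ⊢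
  rcases Nat.eq_zero_or_pos r with rfl | hr0
  · simp_all
  · subst hr
    have hkr : k ≤ k * r := Nat.le_mul_of_pos_right k hr0
    nlinarith [Nat.mul_le_mul_right (k * r) hkr]

section CountingQuadratic

/-- The hypothesis `hcount` of `le_of_counting_inequality` is equivalent to
`Q ^ m * P b ≥ (b - 1) * (b - q0 - 1)` for `P = countingQuadratic q0 Q`. -/
def countingQuadratic (q0 Q y : ℝ) : ℝ := y ^ 2 - (1 + (q0 + 1) * Q) * y + (q0 + 1) * Q ^ 2

theorem countingQuadratic_nonpos_of_mem_Icc {q0 Q r x y : ℝ}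
    (hr : countingQuadratic q0 Q r ≤ 0) (hx : countingQuadratic q0 Q x ≤ 0)
    (hry : r ≤ y) (hyx : y ≤ x) : countingQuadratic q0 Q y ≤ 0 := by
  rcases (hry.trans hyx).eq_or_lt with hrx | hrx
  · rwa [le_antisymm hyx (hrx ▸ hry)]
  have hinterp : (x - r) * countingQuadratic q0 Q y = (x - y) * countingQuadratic q0 Q r +
      (y - r) * countingQuadratic q0 Q x - (x - y) * (y - r) * (x - r) := by
    unfold countingQuadratic
    ring
  refine nonpos_of_mul_nonpos_right (a := x - r) ?_ (sub_pos.2 hrx)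
  rw [hinterp]
  nlinarith [mul_nonpos_of_nonneg_of_nonpos (sub_nonneg.2 hyx) hr,
    mul_nonpos_of_nonneg_of_nonpos (sub_nonneg.2 hry) hx,
    mul_nonneg (mul_nonneg (sub_nonneg.2 hyx) (sub_nonneg.2 hry)) (sub_pos.2 hrx).le]

theorem countingQuadratic_three_halves_nonpos {q0 Q : ℝ} (hq0 : 7 ≤ q0) (hQ : q0 ≤ Q) :
    countingQuadratic q0 Q (3 * (Q + 1) / 2) ≤ 0 := by
  unfold countingQuadratic
  nlinarith [mul_le_mul_of_nonneg_right hq0 (by nlinarith : 0 ≤ 2 * Q ^ 2 + 6 * Q)]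

theorem countingQuadratic_bound_nonpos {q0 Q : ℝ} (hq0 : 7 ≤ q0) (hQ : q0 ≤ Q) :
    countingQuadratic q0 Q (Q + Q / q0 + Q / q0 ^ 2 + 3 * Q / q0 ^ 3) ≤ 0 := by
  have hq0pos : 0 < q0 := by linarith
  have hQpos : 0 < Q := by linarith
  have hexpand : q0 ^ 6 * countingQuadratic q0 Q (Q + Q / q0 + Q / q0 ^ 2 + 3 * Q / q0 ^ 3) =
      Q ^ 2 * (-q0 ^ 4 + 5 * q0 ^ 3 + 7 * q0 ^ 2 + 6 * q0 + 9) -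
        Q * q0 ^ 3 * (q0 ^ 3 + q0 ^ 2 + q0 + 3) := by
    unfold countingQuadratic
    field_simp
    ring
  -- false for `q0 = 6`: the origin of the bound `q0 ≥ 7`
  have hneg : -q0 ^ 4 + 5 * q0 ^ 3 + 7 * q0 ^ 2 + 6 * q0 + 9 ≤ 0 := by
    nlinarith [pow_pos hq0pos 2, pow_pos hq0pos 3]
  have : q0 ^ 6 * countingQuadratic q0 Q (Q + Q / q0 + Q / q0 ^ 2 + 3 * Q / q0 ^ 3) ≤ 0 := by
    rw [hexpand]
    nlinarith [mul_nonpos_of_nonneg_of_nonpos (sq_nonneg Q) hneg,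
      (by positivity : 0 ≤ Q * q0 ^ 3 * (q0 ^ 3 + q0 ^ 2 + q0 + 3))]
  exact nonpos_of_mul_nonpos_right this (by positivity)

theorem le_of_counting_inequality {q0 Q b : ℝ} {m : ℕ} (hq0 : 7 ≤ q0) (hQ : q0 ≤ Q)
    (hsmall : 2 * b < 3 * (Q + 1))
    (hcount : (q0 + 1) * (b * (Q ^ (m + 1) - 1)) ≤
      b * (b - 1) * (Q ^ m - 1) + (q0 + 1) * (Q ^ (m + 2) - 1)) :
    b ≤ Q + Q / q0 + Q / q0 ^ 2 + 3 * (Q / q0 ^ 3) := by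
  rw [← mul_div_assoc]
  set R := Q + Q / q0 + Q / q0 ^ 2 + 3 * Q / q0 ^ 3
  by_contra! hRb
  have hQR : Q + 1 ≤ R := by
    have : 1 ≤ Q / q0 := (one_le_div (by linarith)).mpr hQ
    have : 0 ≤ Q / q0 ^ 2 + 3 * Q / q0 ^ 3 := by
      have : 0 ≤ Q := by linarith
      positivity
    linarith
  have hM : 1 ≤ Q ^ m := one_le_pow₀ (by linarith)
  have hpos : 0 < countingQuadratic q0 Q b := by
    have hscaled : (b - 1) * (b - q0 - 1) ≤ Q ^ m * countingQuadratic q0 Q b := by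
      rw [pow_succ, pow_add] at hcount
      unfold countingQuadratic
      nlinarith
    have : 0 < (b - 1) * (b - q0 - 1) := mul_pos (by linarith) (by linarith)
    exact pos_of_mul_pos_right (this.trans_le hscaled) (by linarith)
  have hnonpos : countingQuadratic q0 Q b ≤ 0 :=
    countingQuadratic_nonpos_of_mem_Icc (countingQuadratic_bound_nonpos hq0 hQ)
      (countingQuadratic_three_halves_nonpos hq0 hQ) hRb.le (by linarith)
  linarith

end CountingQuadratic

section BlockingSets

open Finset Classical

variable {F}

theorem IsBlockingSet.finrank_ne_one {B : Set (Projectivization F V)} (hB : IsBlockingSet F B) :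
    finrank F V ≠ 1 := by
  intro hV
  obtain ⟨x, -, hx⟩ := hB ⊥ (by rw [IsHyperplane, finrank_bot, hV])
  have hrank := x.finrank_submodule
  rw [le_bot_iff.mp (show x.submodule ≤ ⊥ from hx), finrank_bot] at hrank
  exact zero_ne_one hrank

theorem ncard_coe_inter_projPoints (B : Finset (Projectivization F V)) (W : Submodule F V) :
    ((B : Set (Projectivization F V)) ∩ projPoints F W).ncard = #{x ∈ B | x.submodule ≤ W} := by
  rw [← Set.ncard_coe_finset, coe_filter]
  rfl

theorem IsBlockingSet.counting_inequality [Finite F] [FiniteDimensional F V] {m q0 : ℕ}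
    (hV : finrank F V = m + 2) {B : Finset (Projectivization F V)}
    (hB : IsBlockingSet F (B : Set (Projectivization F V)))
    (hmod : ∀ W, IsHyperplane F W →
      ((B : Set (Projectivization F V)) ∩ projPoints F W).ncard ≡ 1 [MOD q0]) :
    (q0 + 1) * (#B * (Nat.card F ^ (m + 1) - 1)) ≤
      #B * (#B - 1) * (Nat.card F ^ m - 1) + (q0 + 1) * (Nat.card F ^ (m + 2) - 1) := by
  set s : Submodule F V → ℕ := fun W => #{x ∈ B | x.submodule ≤ W}
  have hW : ∀ W ∈ hyperplanes, (q0 + 1) * s W ≤ s W * (s W - 1) + (q0 + 1) := by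
    intro W hW
    have hWH : IsHyperplane F W := by simpa [hyperplanes] using hW
    have hmodW := hmod W hWH
    have hpos := (Set.ncard_pos (Set.toFinite _)).mpr (hB W hWH)
    rw [ncard_coe_inter_projPoints] at hmodW hpos
    exact add_one_mul_le_mul_sub_one_add hpos hmodW
  have hsum : (q0 + 1) * ∑ W ∈ hyperplanes, s W ≤
      ∑ W ∈ hyperplanes, s W * (s W - 1) + (q0 + 1) * #(hyperplanes : Finset (Submodule F V)) := by
    rw [mul_sum, mul_comm, ← smul_eq_mul, ← sum_const, ← sum_add_distrib]
    exact sum_le_sum hW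
  have hdim1 : finrank F V - 1 = m + 1 := by omega
  have hdim2 : finrank F V - 2 = m := by omega
  calc (q0 + 1) * (#B * (Nat.card F ^ (m + 1) - 1))
      = (q0 + 1) * (∑ W ∈ hyperplanes, s W) * (Nat.card F - 1) := by
        rw [mul_assoc, sum_card_points_on_hyperplanes_mul, hdim1]
    _ ≤ (∑ W ∈ hyperplanes, s W * (s W - 1) + (q0 + 1) * #(hyperplanes : Finset (Submodule F V)))
        * (Nat.card F - 1) := Nat.mul_le_mul_right _ hsum
    _ = #B * (#B - 1) * (Nat.card F ^ m - 1) + (q0 + 1) * (Nat.card F ^ (m + 2) - 1) := by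
        rw [add_mul, mul_assoc, sum_card_pairs_on_hyperplanes_mul, card_hyperplanes_mul, hdim2, hV]

theorem IsBlockingSet.ncard_le [Fintype F] [FiniteDimensional F V] {m q0 : ℕ}
    (hV : finrank F V = m + 2) {B : Set (Projectivization F V)} (hB : IsBlockingSet F B)
    (hmod : ∀ W, IsHyperplane F W → (B ∩ projPoints F W).ncard ≡ 1 [MOD q0])
    (hsmall : IsSmall F B) (hq0 : 7 ≤ q0) (hq0q : q0 ≤ Fintype.card F) :
    (B.ncard : ℝ) ≤ Fintype.card F + Fintype.card F / q0 + Fintype.card F / q0 ^ 2 +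
      3 * (Fintype.card F / q0 ^ 3) := by
  have : Finite V := Module.finite_of_finite F
  lift B to Finset (Projectivization F V) using B.toFinite
  have hcount := hB.counting_inequality hV hmod
  rw [IsSmall, Set.ncard_coe_finset] at hsmall
  rw [Nat.card_eq_fintype_card] at hcount
  rw [Set.ncard_coe_finset]
  rcases B.eq_empty_or_nonempty with rfl | hne
  · simp only [Finset.card_empty, CharP.cast_eq_zero]
    positivity
  have hq1 : 1 ≤ Fintype.card F := Fintype.card_pos
  refine le_of_counting_inequality (m := m) (by exact_mod_cast hq0) (by exact_mod_cast hq0q)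
    (by exact_mod_cast hsmall) ?_
  have := (Nat.cast_le (α := ℝ)).mpr hcount
  push_cast [Nat.cast_sub hne.card_pos, Nat.cast_sub (Nat.one_le_pow _ _ hq1)] at this
  exact this

end BlockingSets

theorem statement4 [Fintype F] (p t n e q0 h : ℕ)
    (hq : Fintype.card F = p ^ t) (hV : finrank F V = n + 1)
    (B : Set (Projectivization F V))
    (hBsmall : IsSmall F B) (hBmin : IsMinimalBlockingSet F B)
    (hBexp : HasExponent F p B e) (he : e ∣ t)
    (hq0 : q0 = p ^ e) (hh : h = t / e) (hq0big : 7 ≤ q0) :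
    (B.ncard : ℝ) ≤ (q0 : ℝ) ^ (h : ℝ) + (q0 : ℝ) ^ ((h : ℝ) - 1)
      + (q0 : ℝ) ^ ((h : ℝ) - 2) + 3 * (q0 : ℝ) ^ ((h : ℝ) - 3) := by
  have hcard : Fintype.card F = q0 ^ h := by rw [hq, hq0, hh, ← pow_mul, Nat.mul_div_cancel' he]
  have hh0 : h ≠ 0 := by
    rintro rfl
    exact (Fintype.one_lt_card (α := F)).ne' (by rw [hcard, pow_zero])
  have : FiniteDimensional F V := Module.finite_of_finrank_eq_succ hV
  obtain ⟨m, rfl⟩ : ∃ m, n = m + 1 :=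
    Nat.exists_eq_succ_of_ne_zero fun hn => hBmin.1.finrank_ne_one (by rw [hV, hn])
  have hbound := hBmin.1.ncard_le hV (hq0 ▸ hBexp.2.1) hBsmall hq0big
    (hcard ▸ Nat.le_self_pow hh0 q0)
  have hq0pos : (0 : ℝ) < q0 := by positivity
  simp only [Real.rpow_sub hq0pos, Real.rpow_natCast, Real.rpow_one, Real.rpow_ofNat]
  simpa [hcard] using hbound
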